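/- arXiv:1909.11500 — 2 statements merged into one kernel-verified Lean document; each statement's English description precedes it below -/
import Mathlib

section
/- Let u₁, u₂, u₃ be jointly Gaussian with mean zero, unit variances, and pairwise covariances E[uᵢuⱼ] = ε mᵢⱼ for i ≠ j. Let f₁, f₂, f₃ : ℝ → ℝ be regular functions with aᵢ = E[fᵢ(u)] and bᵢ = E[u fᵢ(u)] for u ~ N(0,1). Then as ε → 0, E[f₁(u₁)f₂(u₂)f₃(u₃)] = a₁a₂a₃ + ε (a₁ m₂₃ b₂ b₃ + a₂ m₁₃ b₁ b₃ + a₃ m₁₂ b₁ b₂) + O(ε²). -/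
open MeasureTheory ProbabilityTheory Matrix Real

/-- Density of a centered multivariate Gaussian with covariance matrix `Φ`. -/
noncomputable def gaussianDensityFn {ι : Type*} [Fintype ι] [DecidableEq ι]
    (Φ : Matrix ι ι ℝ) (x : ι → ℝ) : ℝ :=
  (Real.sqrt ((2 * Real.pi) ^ (Fintype.card ι) * Φ.det))⁻¹ *
    Real.exp (-(x ⬝ᵥ (Φ⁻¹ *ᵥ x)) / 2)

/-- Centered multivariate Gaussian measure with covariance matrix `Φ`. -/
noncomputable def gaussianMeasure {ι : Type*} [Fintype ι] [DecidableEq ι]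
    (Φ : Matrix ι ι ℝ) : Measure (ι → ℝ) :=
  volume.withDensity fun x => ENNReal.ofReal (gaussianDensityFn Φ x)

/-- The error function `erf`. -/
noncomputable def erf (x : ℝ) : ℝ :=
  (2 / Real.sqrt Real.pi) * ∫ t in (0 : ℝ)..x, Real.exp (-t ^ 2)
open Filter Asymptotics Topology

/-! For small `ε` the correlation matrix `I + εA` (with `A` symmetric with zero diagonal) has
determinant `1 + O(ε²)` and inverse `I - εA + O(ε²)`, so its Gaussian density equals
`φ(x₀)φ(x₁)φ(x₂)(1 + ε Σ mᵢⱼ xᵢxⱼ)` up to an error `ε² C (1 + |x|²)² exp(-3|x|²/8)`, uniformly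
in `x`. Against `f₀(x₀)f₁(x₁)f₂(x₂)`, which grows polynomially, the main term factorises by Fubini
into the `aᵢ` and `bᵢ`, and the error integrates to `O(ε²)`. -/

lemma abs_exp_sub_one_sub_le (t : ℝ) : |exp t - 1 - t| ≤ t ^ 2 * exp |t| := by
  have h1 : 1 ≤ exp |t| := one_le_exp (abs_nonneg t)
  rcases le_or_gt |t| 1 with ht | ht
  · nlinarith [abs_exp_sub_one_sub_id_le ht, sq_nonneg t]
  · have h0 : 0 ≤ exp t - 1 - t := by linarith [add_one_le_exp t]
    have h2 : exp t ≤ exp |t| := exp_le_exp.2 (le_abs_self t)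
    rw [abs_of_nonneg h0, ← sq_abs]
    nlinarith [neg_abs_le t,
      mul_nonneg (sub_nonneg.2 ht.le) (by nlinarith : 0 ≤ (|t| + 1) * exp |t| - 1)]

lemma abs_inv_sub_one_le {D : ℝ} (hD : 1 / 2 ≤ D) : |D⁻¹ - 1| ≤ 2 * |D - 1| := by
  have hD0 : 0 < D := by linarith
  rw [show D⁻¹ - 1 = -(D - 1) * D⁻¹ by field_simp; ring, abs_mul, abs_neg,
    abs_of_pos (inv_pos.2 hD0), mul_comm]
  gcongr
  rw [inv_le_comm₀ hD0 two_pos]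
  linarith

lemma abs_sqrt_sub_one_le {y : ℝ} (hy : 0 ≤ y) : |√y - 1| ≤ |y - 1| := by
  have h : |√y - 1| * (√y + 1) = |y - 1| := by
    rw [← abs_of_nonneg (by positivity : 0 ≤ √y + 1), ← abs_mul]
    congr 1
    nlinarith [sq_sqrt hy]
  nlinarith [abs_nonneg (√y - 1), sqrt_nonneg y]

lemma abs_inv_sqrt_sub_one_le {D : ℝ} (hD : 1 / 2 ≤ D) : |(√D)⁻¹ - 1| ≤ 2 * |D - 1| := by
  rw [← sqrt_inv]
  exact (abs_sqrt_sub_one_le (inv_nonneg.2 (by linarith))).trans (abs_inv_sub_one_le hD)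

lemma abs_exponent_sub_le {K ε D s q r : ℝ} (hK : 0 ≤ K) (hε : |ε| ≤ 1) (hs : 0 ≤ s)
    (hD : |D - 1| ≤ K * ε ^ 2) (hD' : 1 / 2 ≤ D) (hq : |q| ≤ K * s) (hr : |r| ≤ K * s) :
    |(s - D⁻¹ * (s - 2 * ε * q + ε ^ 2 * r)) / 2 - ε * q| ≤ ε ^ 2 * (2 * K + 2 * K ^ 2) * s := by
  have he : |D⁻¹ - 1| ≤ 2 * (K * ε ^ 2) := (abs_inv_sub_one_le hD').trans (by gcongr)
  have hDinv : |D⁻¹| ≤ 2 := by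
    rw [abs_of_pos (inv_pos.2 (by linarith)), inv_le_comm₀ (by linarith) two_pos]; linarith
  have h1 : |s * (D⁻¹ - 1) / 2| ≤ K * ε ^ 2 * s := by
    rw [abs_div, abs_mul, abs_of_nonneg hs, abs_two]; nlinarith
  have h2 : |ε * q * (D⁻¹ - 1)| ≤ 2 * K ^ 2 * ε ^ 2 * s := by
    rw [abs_mul, abs_mul]
    calc |ε| * |q| * |D⁻¹ - 1| ≤ 1 * (K * s) * (2 * (K * ε ^ 2)) := by gcongr
      _ = 2 * K ^ 2 * ε ^ 2 * s := by ring
  have h3 : |ε ^ 2 * (D⁻¹ * r) / 2| ≤ K * ε ^ 2 * s := by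
    rw [abs_div, abs_mul, abs_mul, abs_two, abs_of_nonneg (sq_nonneg ε)]
    calc ε ^ 2 * (|D⁻¹| * |r|) / 2 ≤ ε ^ 2 * (2 * (K * s)) / 2 := by gcongr
      _ = K * ε ^ 2 * s := by ring
  calc |(s - D⁻¹ * (s - 2 * ε * q + ε ^ 2 * r)) / 2 - ε * q|
      = |-(s * (D⁻¹ - 1) / 2) + ε * q * (D⁻¹ - 1) - ε ^ 2 * (D⁻¹ * r) / 2| := by ring_nf
    _ ≤ |s * (D⁻¹ - 1) / 2| + |ε * q * (D⁻¹ - 1)| + |ε ^ 2 * (D⁻¹ * r) / 2| := by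
      refine (abs_sub _ _).trans ?_
      gcongr
      exact (abs_add_le _ _).trans_eq (by rw [abs_neg])
    _ ≤ ε ^ 2 * (2 * K + 2 * K ^ 2) * s := by linarith

lemma abs_mul_exp_add_sub_le {a Δ p s : ℝ} (hΔ : |Δ| ≤ s / 8) :
    |a * exp (-s / 2 + Δ) - exp (-s / 2) * (1 + p)|
      ≤ exp (-s / 2) * ((|a - 1| + Δ ^ 2) * exp (s / 8) + |Δ - p|) := by
  have hexp : exp Δ ≤ exp (s / 8) := exp_le_exp.2 ((le_abs_self Δ).trans hΔ)
  have hTaylor : |exp Δ - 1 - Δ| ≤ Δ ^ 2 * exp (s / 8) :=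
    (abs_exp_sub_one_sub_le Δ).trans (by gcongr)
  rw [exp_add, show a * (exp (-s / 2) * exp Δ) - exp (-s / 2) * (1 + p)
      = exp (-s / 2) * ((a - 1) * exp Δ + (exp Δ - 1 - Δ) + (Δ - p)) by ring,
    abs_mul, abs_exp]
  gcongr
  refine (abs_add_three _ _ _).trans ?_
  rw [abs_mul, abs_exp, add_mul]
  gcongr

/-- `D` and `s - 2εq + ε²r` stand for the determinant and the adjugate quadratic form at `x` of a
correlation matrix `I + O(ε)`, with `s = |x|²`; then `Δ = (s - D⁻¹ (s - 2εq + ε²r)) / 2` is the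
exponent of its density relative to `exp (-s / 2)`, and `Δ = εq + O(ε² s)`. -/
theorem exists_abs_inv_sqrt_mul_exp_sub_le {K : ℝ} (hK : 0 ≤ K) :
    ∃ δ > 0, ∃ C ≥ 0, ∀ ε, |ε| ≤ δ → ∀ D s q r : ℝ, 0 ≤ s → |D - 1| ≤ K * ε ^ 2 →
      |q| ≤ K * s → |r| ≤ K * s →
      |(√D)⁻¹ * exp (-(D⁻¹ * (s - 2 * ε * q + ε ^ 2 * r)) / 2) - exp (-s / 2) * (1 + ε * q)|
        ≤ ε ^ 2 * C * (1 + s) ^ 2 * exp (-(3 / 8) * s) := by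
  set L := 3 * K + 2 * K ^ 2 + 1
  have hL : 1 ≤ L := by nlinarith [sq_nonneg K]
  refine ⟨1 / (8 * L), by positivity, 3 * L ^ 2, by positivity,
    fun ε hε D s q r hs hD hq hr => ?_⟩
  -- `δ = 1 / (8L)` keeps `|Δ| ≤ s / 8`, so `exp |Δ|` costs only `s / 8` of the decay `s / 2`.
  have hεL : |ε| * L ≤ 1 / 8 := by
    rwa [le_div_iff₀ (by positivity), mul_left_comm, ← le_div_iff₀' (by norm_num)] at hε
  have hε1 : |ε| ≤ 1 := by nlinarith [abs_nonneg ε]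
  have hε2 : ε ^ 2 ≤ |ε| := by rw [← sq_abs]; nlinarith [abs_nonneg ε]
  have hD' : 1 / 2 ≤ D := by nlinarith [(abs_le.1 hD).1, abs_nonneg ε]
  set Δ := (s - D⁻¹ * (s - 2 * ε * q + ε ^ 2 * r)) / 2
  have hΔq : |Δ - ε * q| ≤ ε ^ 2 * (2 * K + 2 * K ^ 2) * s :=
    abs_exponent_sub_le hK hε1 hs hD hD' hq hr
  have hΔ : |Δ| ≤ |ε| * L * s := by
    have hεq : |ε * q| ≤ |ε| * (K * s) := by rw [abs_mul]; gcongr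
    have : ε ^ 2 * (2 * K + 2 * K ^ 2) * s ≤ |ε| * (2 * K + 2 * K ^ 2) * s := by gcongr
    have hLs : |ε| * L * s = |ε| * (K * s) + |ε| * (2 * K + 2 * K ^ 2) * s + |ε| * s := by ring
    linarith [abs_sub_abs_le_abs_sub Δ (ε * q), mul_nonneg (abs_nonneg ε) hs]
  have hsqrt : |(√D)⁻¹ - 1| ≤ 2 * K * ε ^ 2 := (abs_inv_sqrt_sub_one_le hD').trans (by linarith)
  have hΔ2 : Δ ^ 2 ≤ ε ^ 2 * L ^ 2 * s ^ 2 := by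
    rw [← sq_abs Δ, ← sq_abs ε]; nlinarith [abs_nonneg Δ]
  have hΔqL : |Δ - ε * q| ≤ ε ^ 2 * L * s := hΔq.trans (by gcongr; linarith)
  rw [show -(D⁻¹ * (s - 2 * ε * q + ε ^ 2 * r)) / 2 = -s / 2 + Δ by ring]
  refine (abs_mul_exp_add_sub_le (by nlinarith)).trans ?_
  have h1 : 1 ≤ exp (s / 8) := one_le_exp (by positivity)
  calc exp (-s / 2) * ((|(√D)⁻¹ - 1| + Δ ^ 2) * exp (s / 8) + |Δ - ε * q|)
      ≤ exp (-s / 2) * (ε ^ 2 * (2 * K + L ^ 2 * s ^ 2 + L * s) * exp (s / 8)) := by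
        gcongr
        nlinarith [mul_nonneg (mul_nonneg (sq_nonneg ε) (by positivity : 0 ≤ L * s))
          (sub_nonneg.2 h1)]
    _ ≤ exp (-s / 2) * (ε ^ 2 * (3 * L ^ 2 * (1 + s) ^ 2) * exp (s / 8)) := by
        gcongr
        nlinarith [mul_nonneg (by positivity : (0 : ℝ) ≤ L) hs]
    _ = ε ^ 2 * (3 * L ^ 2) * (1 + s) ^ 2 * exp (-(3 / 8) * s) := by
        rw [mul_left_comm, mul_assoc, ← exp_add]; ring_nf

def crossForm (α β γ : ℝ) (x : Fin 3 → ℝ) : ℝ :=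
  α * (x 0 * x 1) + β * (x 0 * x 2) + γ * (x 1 * x 2)

/-- The `ε²`-coefficient of the adjugate quadratic form of `weakCorrMatrix ε α β γ`. -/
def adjugateSecondOrder (α β γ : ℝ) (x : Fin 3 → ℝ) : ℝ :=
  crossForm (2 * β * γ) (2 * α * γ) (2 * α * β) x
    - (γ ^ 2 * x 0 ^ 2 + β ^ 2 * x 1 ^ 2 + α ^ 2 * x 2 ^ 2)

def weakCorrMatrix (ε α β γ : ℝ) : Matrix (Fin 3) (Fin 3) ℝ :=
  !![1, ε * α, ε * β; ε * α, 1, ε * γ; ε * β, ε * γ, 1]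

lemma det_weakCorrMatrix (ε α β γ : ℝ) :
    (weakCorrMatrix ε α β γ).det
      = 1 + ε ^ 2 * (2 * ε * (α * β * γ) - (α ^ 2 + β ^ 2 + γ ^ 2)) := by
  simp [weakCorrMatrix, Matrix.det_fin_three]; ring

lemma dotProduct_inv_weakCorrMatrix_mulVec (ε α β γ : ℝ) (x : Fin 3 → ℝ) :
    x ⬝ᵥ ((weakCorrMatrix ε α β γ)⁻¹ *ᵥ x) = (weakCorrMatrix ε α β γ).det⁻¹ *
      (x 0 ^ 2 + x 1 ^ 2 + x 2 ^ 2 - 2 * ε * crossForm α β γ x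
        + ε ^ 2 * adjugateSecondOrder α β γ x) := by
  rw [Matrix.inv_def, Ring.inverse_eq_inv', weakCorrMatrix, Matrix.adjugate_fin_three]
  simp [Matrix.mulVec, dotProduct, Fin.sum_univ_three, crossForm, adjugateSecondOrder]
  ring

lemma abs_crossForm_le (α β γ : ℝ) (x : Fin 3 → ℝ) :
    |crossForm α β γ x| ≤ (|α| + |β| + |γ|) * (x 0 ^ 2 + x 1 ^ 2 + x 2 ^ 2) := by
  have hxy : ∀ a b : ℝ, |a * b| ≤ a ^ 2 + b ^ 2 := fun a b => by
    rw [abs_mul]; nlinarith [sq_abs a, sq_abs b, sq_nonneg (|a| - |b|)]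
  have h01 := hxy (x 0) (x 1)
  have h02 := hxy (x 0) (x 2)
  have h12 := hxy (x 1) (x 2)
  unfold crossForm
  refine (abs_add_three _ _ _).trans ?_
  simp only [abs_mul] at *
  nlinarith [abs_nonneg α, abs_nonneg β, abs_nonneg γ, sq_nonneg (x 0), sq_nonneg (x 1),
    sq_nonneg (x 2), abs_nonneg (x 0), abs_nonneg (x 1), abs_nonneg (x 2)]

lemma sq_abs_add_abs_add_abs (α β γ : ℝ) : (|α| + |β| + |γ|) ^ 2
    = 2 * |β| * |γ| + 2 * |α| * |γ| + 2 * |α| * |β| + (α ^ 2 + β ^ 2 + γ ^ 2) := by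
  rw [← sq_abs α, ← sq_abs β, ← sq_abs γ]; ring

lemma abs_adjugateSecondOrder_le (α β γ : ℝ) (x : Fin 3 → ℝ) :
    |adjugateSecondOrder α β γ x| ≤ (|α| + |β| + |γ|) ^ 2 * (x 0 ^ 2 + x 1 ^ 2 + x 2 ^ 2) := by
  have hcross := abs_crossForm_le (2 * β * γ) (2 * α * γ) (2 * α * β) x
  simp only [abs_mul, abs_two] at hcross
  have hdiag : |γ ^ 2 * x 0 ^ 2 + β ^ 2 * x 1 ^ 2 + α ^ 2 * x 2 ^ 2|
      ≤ (α ^ 2 + β ^ 2 + γ ^ 2) * (x 0 ^ 2 + x 1 ^ 2 + x 2 ^ 2) := by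
    rw [abs_of_nonneg (by positivity)]
    nlinarith [mul_nonneg (sq_nonneg α) (sq_nonneg (x 0)),
      mul_nonneg (sq_nonneg α) (sq_nonneg (x 1)), mul_nonneg (sq_nonneg β) (sq_nonneg (x 0)),
      mul_nonneg (sq_nonneg β) (sq_nonneg (x 2)), mul_nonneg (sq_nonneg γ) (sq_nonneg (x 1)),
      mul_nonneg (sq_nonneg γ) (sq_nonneg (x 2))]
  rw [sq_abs_add_abs_add_abs, add_mul]
  exact (abs_sub _ _).trans (add_le_add hcross hdiag)

lemma abs_det_weakCorrMatrix_sub_one_le {ε : ℝ} (hε : |ε| ≤ 1) (α β γ : ℝ) :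
    |(weakCorrMatrix ε α β γ).det - 1|
      ≤ ((|α| + |β| + |γ|) ^ 2 + 2 * (|α| + |β| + |γ|) ^ 3) * ε ^ 2 := by
  have habc : |α * β * γ| ≤ (|α| + |β| + |γ|) ^ 3 := by
    rw [abs_mul, abs_mul]
    calc |α| * |β| * |γ| ≤ (|α| + |β| + |γ|) * (|α| + |β| + |γ|) * (|α| + |β| + |γ|) := by
          gcongr <;> linarith [abs_nonneg α, abs_nonneg β, abs_nonneg γ]
      _ = (|α| + |β| + |γ|) ^ 3 := by ring
  have hεabc : |ε| * |α * β * γ| ≤ 1 * (|α| + |β| + |γ|) ^ 3 := by gcongr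
  rw [det_weakCorrMatrix, add_sub_cancel_left, abs_mul, abs_of_nonneg (sq_nonneg _), mul_comm]
  gcongr
  refine (abs_sub _ _).trans ?_
  rw [abs_mul, abs_mul, abs_two, abs_of_nonneg (by positivity : 0 ≤ α ^ 2 + β ^ 2 + γ ^ 2),
    sq_abs_add_abs_add_abs]
  nlinarith [mul_nonneg (abs_nonneg α) (abs_nonneg β), mul_nonneg (abs_nonneg α) (abs_nonneg γ),
    mul_nonneg (abs_nonneg β) (abs_nonneg γ)]

lemma gaussianPDFReal_zero_one (t : ℝ) :
    gaussianPDFReal 0 1 t = (√(2 * π))⁻¹ * exp (-t ^ 2 / 2) := by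
  simp [gaussianPDFReal]

lemma inv_sqrt_two_pi_pow_three_mul (D : ℝ) :
    (√((2 * π) ^ 3 * D))⁻¹ = (√(2 * π))⁻¹ ^ 3 * (√D)⁻¹ := by
  have h2π : 0 ≤ 2 * π := by positivity
  rw [sqrt_mul (by positivity), mul_inv, inv_pow, show (2 * π) ^ 3 = (√(2 * π) ^ 3) ^ 2 by
    rw [pow_right_comm, sq_sqrt h2π], sqrt_sq (by positivity)]

theorem exists_abs_gaussianDensityFn_weakCorrMatrix_sub_le (α β γ : ℝ) :
    ∃ δ > 0, ∃ C ≥ 0, ∀ ε, |ε| ≤ δ → ∀ x : Fin 3 → ℝ,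
      |gaussianDensityFn (weakCorrMatrix ε α β γ) x
          - gaussianPDFReal 0 1 (x 0) * gaussianPDFReal 0 1 (x 1) * gaussianPDFReal 0 1 (x 2)
            * (1 + ε * crossForm α β γ x)|
        ≤ ε ^ 2 * C * (1 + (x 0 ^ 2 + x 1 ^ 2 + x 2 ^ 2)) ^ 2
          * exp (-(3 / 8) * (x 0 ^ 2 + x 1 ^ 2 + x 2 ^ 2)) := by
  set c := |α| + |β| + |γ|
  have hc : 0 ≤ c := by positivity
  have hcK : c ^ 2 ≤ c + c ^ 2 + 2 * c ^ 3 := by nlinarith [pow_nonneg hc 3]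
  obtain ⟨δ, hδ, C, hC0, hC⟩ :=
    exists_abs_inv_sqrt_mul_exp_sub_le (K := c + c ^ 2 + 2 * c ^ 3) (by positivity)
  refine ⟨min δ 1, by positivity, (√(2 * π))⁻¹ ^ 3 * C, by positivity, fun ε hε x => ?_⟩
  set s := x 0 ^ 2 + x 1 ^ 2 + x 2 ^ 2
  have hs : 0 ≤ s := by positivity
  have key := hC ε (hε.trans (min_le_left _ _)) _ s _ _ hs
    ((abs_det_weakCorrMatrix_sub_one_le (hε.trans (min_le_right _ _)) α β γ).trans
      (by gcongr; linarith))
    ((abs_crossForm_le α β γ x).trans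
      (mul_le_mul_of_nonneg_right (by nlinarith [pow_nonneg hc 3]) hs))
    ((abs_adjugateSecondOrder_le α β γ x).trans (by gcongr))
  have hpdf : gaussianPDFReal 0 1 (x 0) * gaussianPDFReal 0 1 (x 1) * gaussianPDFReal 0 1 (x 2)
      = (√(2 * π))⁻¹ ^ 3 * exp (-s / 2) := by
    simp only [gaussianPDFReal_zero_one, s, neg_div, add_div, neg_add, exp_add]
    ring
  rw [gaussianDensityFn, Fintype.card_fin, dotProduct_inv_weakCorrMatrix_mulVec, hpdf,
    inv_sqrt_two_pi_pow_three_mul, mul_assoc ((√(2 * π))⁻¹ ^ 3) (√_)⁻¹,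
    mul_assoc ((√(2 * π))⁻¹ ^ 3) (exp (-s / 2)), ← mul_sub, abs_mul,
    abs_of_nonneg (by positivity)]
  calc _ ≤ (√(2 * π))⁻¹ ^ 3 * (ε ^ 2 * C * (1 + s) ^ 2 * exp (-(3 / 8) * s)) := by gcongr
    _ = _ := by ring

lemma measurable_gaussianDensityFn {ι : Type*} [Fintype ι] [DecidableEq ι] (Φ : Matrix ι ι ℝ) :
    Measurable (gaussianDensityFn Φ) := by
  unfold gaussianDensityFn; fun_prop

lemma integral_gaussianMeasure_eq {ι : Type*} [Fintype ι] [DecidableEq ι] (Φ : Matrix ι ι ℝ)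
    (F : (ι → ℝ) → ℝ) : ∫ x, F x ∂gaussianMeasure Φ = ∫ x, gaussianDensityFn Φ x * F x := by
  rw [gaussianMeasure, integral_withDensity_eq_integral_toReal_smul
    (measurable_gaussianDensityFn Φ).ennreal_ofReal
    (ae_of_all _ fun _ => ENNReal.ofReal_lt_top)]
  congr 1 with x
  rw [ENNReal.toReal_ofReal (by unfold gaussianDensityFn; positivity), smul_eq_mul]

lemma integral_fin_three_mul (u v w : ℝ → ℝ) :
    ∫ x : Fin 3 → ℝ, u (x 0) * v (x 1) * w (x 2) = (∫ t, u t) * (∫ t, v t) * ∫ t, w t := by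
  simpa [Fin.prod_univ_three] using integral_fintype_prod_volume_eq_prod (ι := Fin 3) ![u, v, w]

lemma MeasureTheory.Integrable.fin_three_mul {u v w : ℝ → ℝ} (hu : Integrable u) (hv : Integrable v)
    (hw : Integrable w) : Integrable fun x : Fin 3 → ℝ => u (x 0) * v (x 1) * w (x 2) := by
  refine (Integrable.fintype_prod (f := ![u, v, w]) ?_).congr (ae_of_all _ fun x => ?_)
  · intro i; fin_cases i <;> assumption
  · simp [Fin.prod_univ_three]

lemma integrable_one_add_sq_pow_mul_exp_neg_mul_sq (k : ℕ) {c : ℝ} (hc : 0 < c) :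
    Integrable fun t : ℝ => (1 + t ^ 2) ^ k * exp (-c * t ^ 2) := by
  have hmon : ∀ n : ℕ, Integrable fun t : ℝ => t ^ n * exp (-c * t ^ 2) := fun n => by
    simpa [rpow_natCast] using
      integrable_rpow_mul_exp_neg_mul_sq hc (s := n) (by linarith [n.cast_nonneg (α := ℝ)])
  simp_rw [add_pow, one_pow, one_mul, Finset.sum_mul, ← pow_mul]
  exact integrable_finsetSum _ fun j _ => by
    simpa [mul_comm, mul_assoc] using (hmon (2 * (k - j))).const_mul (k.choose j : ℝ)

section FirstOrder

variable {u : Fin 3 → ℝ → ℝ} (ε α β γ : ℝ)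

lemma prod_mul_one_add_crossForm (x : Fin 3 → ℝ) :
    u 0 (x 0) * u 1 (x 1) * u 2 (x 2) * (1 + ε * crossForm α β γ x)
      = u 0 (x 0) * u 1 (x 1) * u 2 (x 2)
        + ε * (α * (x 0 * u 0 (x 0) * (x 1 * u 1 (x 1)) * u 2 (x 2))
          + β * (x 0 * u 0 (x 0) * u 1 (x 1) * (x 2 * u 2 (x 2)))
          + γ * (u 0 (x 0) * (x 1 * u 1 (x 1)) * (x 2 * u 2 (x 2)))) := by
  unfold crossForm; ring

lemma integrable_prod_mul_one_add_crossForm (hu : ∀ i, Integrable (u i))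
    (hu' : ∀ i, Integrable fun t => t * u i t) :
    Integrable fun x : Fin 3 → ℝ =>
      u 0 (x 0) * u 1 (x 1) * u 2 (x 2) * (1 + ε * crossForm α β γ x) := by
  simp_rw [prod_mul_one_add_crossForm]
  exact ((hu 0).fin_three_mul (hu 1) (hu 2)).add
    (((((hu' 0).fin_three_mul (hu' 1) (hu 2)).const_mul α).add
      (((hu' 0).fin_three_mul (hu 1) (hu' 2)).const_mul β)).add
      (((hu 0).fin_three_mul (hu' 1) (hu' 2)).const_mul γ) |>.const_mul ε)

lemma integral_prod_mul_one_add_crossForm (hu : ∀ i, Integrable (u i))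
    (hu' : ∀ i, Integrable fun t => t * u i t) :
    ∫ x : Fin 3 → ℝ, u 0 (x 0) * u 1 (x 1) * u 2 (x 2) * (1 + ε * crossForm α β γ x)
      = (∫ t, u 0 t) * (∫ t, u 1 t) * (∫ t, u 2 t)
        + ε * (α * ((∫ t, t * u 0 t) * (∫ t, t * u 1 t) * ∫ t, u 2 t)
          + β * ((∫ t, t * u 0 t) * (∫ t, u 1 t) * ∫ t, t * u 2 t)
          + γ * ((∫ t, u 0 t) * (∫ t, t * u 1 t) * ∫ t, t * u 2 t)) := by
  have h1 := ((hu' 0).fin_three_mul (hu' 1) (hu 2)).const_mul α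
  have h2 := ((hu' 0).fin_three_mul (hu 1) (hu' 2)).const_mul β
  have h3 := ((hu 0).fin_three_mul (hu' 1) (hu' 2)).const_mul γ
  simp_rw [prod_mul_one_add_crossForm]
  rw [integral_add ((hu 0).fin_three_mul (hu 1) (hu 2))
      (by exact ((h1.add h2).add h3).const_mul ε),
    integral_const_mul, integral_add (by exact h1.add h2) h3, integral_add h1 h2]
  simp only [integral_const_mul]
  rw [integral_fin_three_mul, integral_fin_three_mul (fun t => t * u 0 t) (fun t => t * u 1 t),
    integral_fin_three_mul (fun t => t * u 0 t) (u 1) (fun t => t * u 2 t),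
    integral_fin_three_mul (u 0) (fun t => t * u 1 t) (fun t => t * u 2 t)]

lemma gaussianPDFReal_zero_one_le (t : ℝ) : gaussianPDFReal 0 1 t ≤ exp (-t ^ 2 / 2) := by
  rw [gaussianPDFReal_zero_one]
  refine mul_le_of_le_one_left (exp_pos _).le (inv_le_one_of_one_le₀ ?_)
  rw [one_le_sqrt]
  linarith [pi_gt_three]

lemma integrable_gaussianPDFReal_mul {g : ℝ → ℝ} (hg : Measurable g) {C : ℝ} {k : ℕ}
    (hgC : ∀ t, |g t| ≤ C * (1 + t ^ 2) ^ k) :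
    Integrable fun t => gaussianPDFReal 0 1 t * g t := by
  refine ((integrable_one_add_sq_pow_mul_exp_neg_mul_sq k (c := 1 / 2) (by norm_num)).const_mul
    C).mono' ((measurable_gaussianPDFReal 0 1).mul hg).aestronglyMeasurable
    (ae_of_all _ fun t => ?_)
  rw [norm_mul, Real.norm_eq_abs, Real.norm_eq_abs, abs_of_nonneg (gaussianPDFReal_nonneg 0 1 t)]
  calc gaussianPDFReal 0 1 t * |g t| ≤ exp (-t ^ 2 / 2) * (C * (1 + t ^ 2) ^ k) := by
        gcongr
        exacts [gaussianPDFReal_zero_one_le t, hgC t]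
    _ = C * ((1 + t ^ 2) ^ k * exp (-(1 / 2) * t ^ 2)) := by ring_nf

lemma integrable_mul_gaussianPDFReal_mul {g : ℝ → ℝ} (hg : Measurable g) {C : ℝ} {k : ℕ}
    (hgC : ∀ t, |g t| ≤ C * (1 + t ^ 2) ^ k) :
    Integrable fun t => t * (gaussianPDFReal 0 1 t * g t) := by
  refine (integrable_gaussianPDFReal_mul (g := fun t => t * g t) (by fun_prop) (C := C)
    (k := k + 1) fun t => ?_).congr (ae_of_all _ fun t => by ring)
  rw [abs_mul]
  calc |t| * |g t| ≤ (1 + t ^ 2) * (C * (1 + t ^ 2) ^ k) := by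
        gcongr
        · nlinarith [sq_abs t, abs_nonneg t]
        · exact hgC t
    _ = C * (1 + t ^ 2) ^ (k + 1) := by ring

noncomputable def gaussianEnvelope (t : ℝ) : ℝ := (1 + t ^ 2) ^ 4 * exp (-(3 / 8) * t ^ 2)

lemma integrable_gaussianEnvelope : Integrable gaussianEnvelope :=
  integrable_one_add_sq_pow_mul_exp_neg_mul_sq 4 (by norm_num)

lemma one_add_sum_sq_le_prod (x : Fin 3 → ℝ) :
    1 + (x 0 ^ 2 + x 1 ^ 2 + x 2 ^ 2) ≤ (1 + x 0 ^ 2) * (1 + x 1 ^ 2) * (1 + x 2 ^ 2) := by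
  nlinarith [mul_nonneg (sq_nonneg (x 0)) (sq_nonneg (x 1)),
    mul_nonneg (sq_nonneg (x 0)) (sq_nonneg (x 2)), mul_nonneg (sq_nonneg (x 1)) (sq_nonneg (x 2)),
    mul_nonneg (mul_nonneg (sq_nonneg (x 0)) (sq_nonneg (x 1))) (sq_nonneg (x 2))]

lemma abs_mul_prod_le_gaussianEnvelope {f : Fin 3 → ℝ → ℝ} {C : ℝ}
    (hfC : ∀ i t, |f i t| ≤ C * (1 + t ^ 2) ^ 2) (x : Fin 3 → ℝ) {e y : ℝ} (he : 0 ≤ e)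
    (hy : |y| ≤ e * (1 + (x 0 ^ 2 + x 1 ^ 2 + x 2 ^ 2)) ^ 2
      * exp (-(3 / 8) * (x 0 ^ 2 + x 1 ^ 2 + x 2 ^ 2))) :
    |y * (f 0 (x 0) * f 1 (x 1) * f 2 (x 2))|
      ≤ e * C ^ 3 * (gaussianEnvelope (x 0) * gaussianEnvelope (x 1) * gaussianEnvelope (x 2)) := by
  have hC : 0 ≤ C := by simpa using (abs_nonneg _).trans (hfC 0 0)
  rw [abs_mul, abs_mul, abs_mul]
  calc |y| * (|f 0 (x 0)| * |f 1 (x 1)| * |f 2 (x 2)|)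
      ≤ e * ((1 + x 0 ^ 2) * (1 + x 1 ^ 2) * (1 + x 2 ^ 2)) ^ 2
          * exp (-(3 / 8) * (x 0 ^ 2 + x 1 ^ 2 + x 2 ^ 2))
        * (C * (1 + x 0 ^ 2) ^ 2 * (C * (1 + x 1 ^ 2) ^ 2) * (C * (1 + x 2 ^ 2) ^ 2)) := by
        gcongr
        · exact hy.trans (by gcongr; exact one_add_sum_sq_le_prod x)
        all_goals apply hfC
    _ = _ := by
        simp only [gaussianEnvelope, neg_mul, mul_add, exp_add]
        ring

lemma isBigO_integral_mul_sub_of_abs_le {X : Type*} [MeasurableSpace X] {μ : Measure X}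
    {F w : X → ℝ} {p q : ℝ → X → ℝ} (hw : Integrable w μ)
    (hq : ∀ ε, Integrable (fun x => q ε x * F x) μ)
    (hp : ∀ ε, AEStronglyMeasurable (fun x => p ε x * F x) μ)
    (hpq : ∀ᶠ ε in 𝓝 0, ∀ x, |(p ε x - q ε x) * F x| ≤ ε ^ 2 * w x) :
    (fun ε => (∫ x, p ε x * F x ∂μ) - ∫ x, q ε x * F x ∂μ) =O[𝓝 0] fun ε => ε ^ 2 := by
  refine isBigO_iff.2 ⟨∫ x, w x ∂μ, ?_⟩
  filter_upwards [hpq] with ε hε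
  have hdiff : Integrable (fun x => (p ε x - q ε x) * F x) μ :=
    (hw.const_mul (ε ^ 2)).mono' (((hp ε).sub (hq ε).1).congr
      (ae_of_all _ fun x => by simp only [Pi.sub_apply]; ring)) (ae_of_all _ hε)
  rw [← integral_sub ((hdiff.add (hq ε)).congr
    (ae_of_all _ fun x => by simp only [Pi.add_apply]; ring)) (hq ε)]
  calc ‖∫ x, p ε x * F x - q ε x * F x ∂μ‖ ≤ ∫ x, ε ^ 2 * w x ∂μ :=
        norm_integral_le_of_norm_le (hw.const_mul _) (ae_of_all _ fun x => by
          simpa only [← sub_mul, Real.norm_eq_abs] using hε x)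
    _ = (∫ x, w x ∂μ) * ‖ε ^ 2‖ := by
        rw [integral_const_mul, norm_pow, Real.norm_eq_abs, sq_abs, mul_comm]

theorem isBigO_integral_gaussianMeasure_weakCorrMatrix_sub (α β γ : ℝ) {f : Fin 3 → ℝ → ℝ}
    (hf : ∀ i, Measurable (f i)) {C : ℝ} (hfC : ∀ i t, |f i t| ≤ C * (1 + t ^ 2) ^ 2) :
    (fun ε => (∫ x, f 0 (x 0) * f 1 (x 1) * f 2 (x 2) ∂gaussianMeasure (weakCorrMatrix ε α β γ))
      - (∫ t, f 0 t ∂gaussianReal 0 1) * (∫ t, f 1 t ∂gaussianReal 0 1)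
          * (∫ t, f 2 t ∂gaussianReal 0 1)
      - ε * (α * ((∫ t, t * f 0 t ∂gaussianReal 0 1) * (∫ t, t * f 1 t ∂gaussianReal 0 1)
              * ∫ t, f 2 t ∂gaussianReal 0 1)
          + β * ((∫ t, t * f 0 t ∂gaussianReal 0 1) * (∫ t, f 1 t ∂gaussianReal 0 1)
              * ∫ t, t * f 2 t ∂gaussianReal 0 1)
          + γ * ((∫ t, f 0 t ∂gaussianReal 0 1) * (∫ t, t * f 1 t ∂gaussianReal 0 1)
              * ∫ t, t * f 2 t ∂gaussianReal 0 1)))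
      =O[𝓝 0] fun ε => ε ^ 2 := by
  obtain ⟨δ, hδ, C', hC'0, hC'⟩ := exists_abs_gaussianDensityFn_weakCorrMatrix_sub_le α β γ
  have hu i := integrable_gaussianPDFReal_mul (hf i) (hfC i)
  have hu' i := integrable_mul_gaussianPDFReal_mul (hf i) (hfC i)
  have hw := integrable_gaussianEnvelope.fin_three_mul integrable_gaussianEnvelope
    integrable_gaussianEnvelope |>.const_mul (C' * C ^ 3)
  refine (isBigO_integral_mul_sub_of_abs_le hw
    (F := fun x => f 0 (x 0) * f 1 (x 1) * f 2 (x 2))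
    (p := fun ε => gaussianDensityFn (weakCorrMatrix ε α β γ))
    (q := fun ε x => gaussianPDFReal 0 1 (x 0) * gaussianPDFReal 0 1 (x 1)
      * gaussianPDFReal 0 1 (x 2) * (1 + ε * crossForm α β γ x))
    (fun ε => (integrable_prod_mul_one_add_crossForm ε α β γ hu hu').congr
      (ae_of_all _ fun x => by ring))
    (fun ε => by
      have := hf 0; have := hf 1; have := hf 2
      exact (measurable_gaussianDensityFn _).mul (by fun_prop) |>.aestronglyMeasurable)
    ?_).congr_left fun ε => ?_
  · filter_upwards [Metric.closedBall_mem_nhds (0 : ℝ) hδ] with ε hε x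
    rw [Metric.mem_closedBall, dist_zero_right, Real.norm_eq_abs] at hε
    simpa only [mul_assoc] using
      abs_mul_prod_le_gaussianEnvelope hfC x (by positivity) (hC' ε hε x)
  · have hA i : ∫ t, f i t ∂gaussianReal 0 1 = ∫ t, gaussianPDFReal 0 1 t * f i t :=
      integral_gaussianReal_eq_integral_smul one_ne_zero
    have hB i : ∫ t, t * f i t ∂gaussianReal 0 1 = ∫ t, t * (gaussianPDFReal 0 1 t * f i t) := by
      rw [integral_gaussianReal_eq_integral_smul one_ne_zero]
      simp only [smul_eq_mul, mul_left_comm]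
    rw [integral_gaussianMeasure_eq, sub_sub]
    simp only [hA, hB]
    rw [← integral_prod_mul_one_add_crossForm ε α β γ hu hu']
    congr 2 with x
    ring

lemma one_add_abs_pow_three_le (t : ℝ) : 1 + |t| ^ 3 ≤ 2 * (1 + t ^ 2) ^ 2 := by
  nlinarith [abs_nonneg t, sq_abs t, sq_nonneg (t ^ 2 - |t|), sq_nonneg t]

theorem stmt2_general (m : Fin 3 → Fin 3 → ℝ) (hsymm : ∀ i j, m i j = m j i)
    (f : Fin 3 → ℝ → ℝ)
    (hmeas : ∀ i, Measurable (f i))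
    (hgrow : ∃ Cg : ℝ, ∀ i x, |f i x| ≤ Cg * (1 + |x| ^ 3))
    (a b : Fin 3 → ℝ)
    (ha : ∀ i, a i = ∫ x, f i x ∂ gaussianReal 0 1)
    (hb : ∀ i, b i = ∫ x, x * f i x ∂ gaussianReal 0 1)
    (M : ℝ → Matrix (Fin 3) (Fin 3) ℝ)
    (hM : ∀ ε i j, M ε i j = if i = j then 1 else ε * m i j) :
    (fun ε =>
        (∫ z : Fin 3 → ℝ, f 0 (z 0) * f 1 (z 1) * f 2 (z 2) ∂ gaussianMeasure (M ε))
          - a 0 * a 1 * a 2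
          - ε * (a 0 * m 1 2 * b 1 * b 2 + a 1 * m 0 2 * b 0 * b 2
              + a 2 * m 0 1 * b 0 * b 1))
      =O[𝓝 0] fun ε => ε ^ 2 := by
  obtain ⟨Cg, hCg⟩ := hgrow
  have hf : ∀ i t, |f i t| ≤ 2 * |Cg| * (1 + t ^ 2) ^ 2 := fun i t => by
    calc |f i t| ≤ |Cg| * (1 + |t| ^ 3) := (hCg i t).trans (by gcongr; exact le_abs_self Cg)
      _ ≤ |Cg| * (2 * (1 + t ^ 2) ^ 2) := by gcongr; exact one_add_abs_pow_three_le t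
      _ = 2 * |Cg| * (1 + t ^ 2) ^ 2 := by ring
  have hMε : ∀ ε, M ε = weakCorrMatrix ε (m 0 1) (m 0 2) (m 1 2) := fun ε => by
    ext i j
    fin_cases i <;> fin_cases j <;> simp [hM, weakCorrMatrix, hsymm 1 0, hsymm 2 0, hsymm 2 1]
  simp only [hMε, ha, hb]
  have h := isBigO_integral_gaussianMeasure_weakCorrMatrix_sub (m 0 1) (m 0 2) (m 1 2) hmeas hf
  exact h.congr_left fun ε => by ring

/-- Weak-correlation expansion for three jointly Gaussian unit-variance
variables: E[f₁(u₁)f₂(u₂)f₃(u₃)] = a₁a₂a₃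
+ ε (a₁ m₂₃ b₂b₃ + a₂ m₁₃ b₁b₃ + a₃ m₁₂ b₁b₂) + O(ε²). -/
theorem stmt2 (m : Fin 3 → Fin 3 → ℝ) (hsymm : ∀ i j, m i j = m j i)
    (f : Fin 3 → ℝ → ℝ)
    (hmeas : ∀ i, Measurable (f i))
    (hgrow : ∃ Cg : ℝ, ∀ i x, |f i x| ≤ Cg * (1 + |x| ^ 3))
    (a b : Fin 3 → ℝ)
    (ha : ∀ i, a i = ∫ x, f i x ∂ gaussianReal 0 1)
    (hb : ∀ i, b i = ∫ x, x * f i x ∂ gaussianReal 0 1)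
    (M : ℝ → Matrix (Fin 3) (Fin 3) ℝ)
    (hM : ∀ ε i j, M ε i j = if i = j then 1 else ε * m i j)
    (ε₀ : ℝ) (hε₀ : 0 < ε₀)
    (hMpos : ∀ ε, |ε| < ε₀ → (M ε).PosDef) :
    (fun ε =>
        (∫ z : Fin 3 → ℝ, f 0 (z 0) * f 1 (z 1) * f 2 (z 2) ∂ gaussianMeasure (M ε))
          - a 0 * a 1 * a 2
          - ε * (a 0 * m 1 2 * b 1 * b 2 + a 1 * m 0 2 * b 0 * b 2
              + a 2 * m 0 1 * b 0 * b 1))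
      =O[𝓝 0] fun ε => ε ^ 2 :=
  stmt2_general m hsymm f hmeas hgrow a b ha hb M hM
end FirstOrder
end

section
/- For a student with g(x) = erf(x/√2) and for K = M = 1 with v = ṽ = 1 and g̃ = g, the population error ε_g = (1/π)[arcsin(Q/(1+Q)) + arcsin(T/(1+T)) − 2 arcsin(R/(√(1+Q)√(1+T)))], where Q = E[λ²], T = E[ν²], R = E[λν] for the jointly Gaussian centered pair (λ, ν), vanishes if and only if Q = T = R (perfect alignment), and is nonnegative for every positive semidefinite covariance matrix ((Q, R), (R, T)). -/
open Real

private lemma alg3 {c s : ℝ} (h : c ^ 2 ≤ s ^ 2) (hs : 0 ≤ s) : c ≤ s := by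
  nlinarith [sq_nonneg (c - s), sq_nonneg (c + s)]

private lemma alg1 {a b sa sb : ℝ} (ha0 : 0 ≤ a) (ha1 : a ≤ 1) (hb0 : 0 ≤ b) (hb1 : b ≤ 1)
    (hsa : sa ^ 2 = 1 - a ^ 2) (hsb : sb ^ 2 = 1 - b ^ 2) (hsa0 : 0 ≤ sa) (hsb0 : 0 ≤ sb) :
    sa * sb ≤ 1 - a * b := by
  have h1 : (sa * sb) ^ 2 ≤ (1 - a * b) ^ 2 := by
    rw [mul_pow, hsa, hsb]; nlinarith [sq_nonneg (a - b)]
  exact alg3 h1 (by nlinarith)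

private lemma alg2 {a b sa sb : ℝ} (hsa : sa ^ 2 = 1 - a ^ 2) (hsb : sb ^ 2 = 1 - b ^ 2)
    (hEq : sa * sb = 1 - a * b) : a = b := by
  have h2 : (sa * sb) ^ 2 = (1 - a * b) ^ 2 := by rw [hEq]
  rw [mul_pow, hsa, hsb] at h2
  have : (a - b) ^ 2 = 0 := by nlinarith
  have := pow_eq_zero_iff (n := 2) (by norm_num) |>.1 this
  linarith

lemma key (a b c : ℝ) (ha0 : 0 ≤ a) (ha1 : a < 1) (hb0 : 0 ≤ b) (hb1 : b < 1)
    (hc : c ^ 2 ≤ a * b) :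
    2 * arcsin c ≤ arcsin a + arcsin b ∧
      (2 * arcsin c = arcsin a + arcsin b ↔ (a = b ∧ c = a)) := by
  have hab1 : a * b < 1 := by nlinarith
  have hc1 : c ^ 2 < 1 := lt_of_le_of_lt hc hab1
  have hcm1 : -1 ≤ c := by nlinarith
  have hcp1 : c ≤ 1 := by nlinarith
  have h1a : (0:ℝ) ≤ 1 - a ^ 2 := by nlinarith
  have h1b : (0:ℝ) ≤ 1 - b ^ 2 := by nlinarith
  have hsqa : Real.sqrt (1 - a ^ 2) ^ 2 = 1 - a ^ 2 := Real.sq_sqrt h1a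
  have hsqb : Real.sqrt (1 - b ^ 2) ^ 2 = 1 - b ^ 2 := Real.sq_sqrt h1b
  set α := arcsin a with hα
  set β := arcsin b with hβ
  have hα0 : 0 ≤ α := arcsin_nonneg.2 ha0
  have hβ0 : 0 ≤ β := arcsin_nonneg.2 hb0
  have hα2 : α < π / 2 := arcsin_lt_pi_div_two.2 ha1
  have hβ2 : β < π / 2 := arcsin_lt_pi_div_two.2 hb1
  set m := (α + β) / 2 with hm
  have hm0 : 0 ≤ m := by positivity
  have hm2 : m ≤ π / 2 := by rw [hm]; linarith
  have hmneg : -(π/2) ≤ m := by linarith [pi_div_two_pos.le]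
  have hsa : sin α = a := sin_arcsin (by linarith) ha1.le
  have hsb : sin β = b := sin_arcsin (by linarith) hb1.le
  have hca : cos α = Real.sqrt (1 - a ^ 2) := cos_arcsin a
  have hcb : cos β = Real.sqrt (1 - b ^ 2) := cos_arcsin b
  have hsm0 : 0 ≤ sin m := sin_nonneg_of_nonneg_of_le_pi hm0 (by linarith [pi_pos])
  have hsm2 : sin m ^ 2 = (1 - (Real.sqrt (1 - a ^ 2) * Real.sqrt (1 - b ^ 2) - a * b)) / 2 := by
    have h2m : 2 * m = α + β := by rw [hm]; ring
    have hcs := Real.cos_sq m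
    have hcos : cos (α + β) = cos α * cos β - sin α * sin β := cos_add α β
    rw [sin_sq, hcs, h2m, hcos, hsa, hsb, hca, hcb]
    ring
  have hsq : Real.sqrt (1 - a ^ 2) * Real.sqrt (1 - b ^ 2) ≤ 1 - a * b :=
    alg1 ha0 ha1.le hb0 hb1.le hsqa hsqb (Real.sqrt_nonneg _) (Real.sqrt_nonneg _)
  have hab_sm : a * b ≤ sin m ^ 2 := by rw [hsm2]; linarith
  have hcsm : c ≤ sin m := alg3 (by nlinarith) hsm0
  have harcm : arcsin (sin m) = m := arcsin_sin hmneg hm2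
  have hle : arcsin c ≤ m := by
    calc arcsin c ≤ arcsin (sin m) := monotone_arcsin hcsm
      _ = m := harcm
  refine ⟨by rw [hm] at hle; linarith, ?_, ?_⟩
  · intro heq
    have hceq : arcsin c = m := by rw [hm]; linarith
    have hcval : c = sin m := by
      have h := sin_arcsin hcm1 hcp1
      rw [hceq] at h; exact h.symm
    have hc2m : c ^ 2 = sin m ^ 2 := by rw [hcval]
    have hEq : Real.sqrt (1 - a ^ 2) * Real.sqrt (1 - b ^ 2) = 1 - a * b := by
      have h1 : a * b ≤ c ^ 2 := by rw [hc2m]; exact hab_sm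
      have h2 : c ^ 2 = (1 - (Real.sqrt (1 - a ^ 2) * Real.sqrt (1 - b ^ 2) - a * b)) / 2 := by
        rw [hc2m, hsm2]
      linarith
    have habeq : a = b := alg2 hsqa hsqb hEq
    have hc2a : c ^ 2 = a ^ 2 := by
      have hsa2 : Real.sqrt (1 - a ^ 2) * Real.sqrt (1 - a ^ 2) = 1 - a ^ 2 := by
        rw [← sq]; exact hsqa
      rw [hc2m, hsm2, ← habeq, hsa2]; ring
    have hc0 : 0 ≤ c := hcval ▸ hsm0
    have h1 : c ≤ a := alg3 (le_of_eq hc2a) ha0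
    have h2 : a ≤ c := alg3 (le_of_eq hc2a.symm) hc0
    exact ⟨habeq, le_antisymm h1 h2⟩
  · rintro ⟨hab, hca'⟩
    show 2 * arcsin c = arcsin a + arcsin b
    rw [hca', hab]; ring

/-- For an erf student and erf teacher with K = M = 1 and unit second-layer
weights, the closed-form population error
ε_g = (1/π)[arcsin(Q/(1+Q)) + arcsin(T/(1+T)) − 2 arcsin(R/(√(1+Q)√(1+T)))]
is nonnegative for every positive semidefinite covariance [[Q,R],[R,T]], and
vanishes iff Q = T = R. -/
theorem stmt17 (Q R T eg : ℝ)
    (hQ : 0 ≤ Q) (hT : 0 ≤ T) (hpsd : R ^ 2 ≤ Q * T)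
    (heg : eg = (1 / Real.pi) * (Real.arcsin (Q / (1 + Q)) + Real.arcsin (T / (1 + T))
      - 2 * Real.arcsin (R / (Real.sqrt (1 + Q) * Real.sqrt (1 + T))))) :
    0 ≤ eg ∧ (eg = 0 ↔ (Q = T ∧ T = R)) := by
  have h1Q : (0:ℝ) < 1 + Q := by linarith
  have h1T : (0:ℝ) < 1 + T := by linarith
  set a := Q / (1 + Q) with hadef
  set b := T / (1 + T) with hbdef
  set c := R / (Real.sqrt (1 + Q) * Real.sqrt (1 + T)) with hcdef
  have ha0 : 0 ≤ a := div_nonneg hQ h1Q.le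
  have hb0 : 0 ≤ b := div_nonneg hT h1T.le
  have ha1 : a < 1 := by rw [hadef, div_lt_one h1Q]; linarith
  have hb1 : b < 1 := by rw [hbdef, div_lt_one h1T]; linarith
  have hsmul : (Real.sqrt (1 + Q) * Real.sqrt (1 + T)) ^ 2 = (1 + Q) * (1 + T) := by
    rw [mul_pow, Real.sq_sqrt h1Q.le, Real.sq_sqrt h1T.le]
  have hc2 : c ^ 2 ≤ a * b := by
    rw [hcdef, div_pow, hsmul, hadef, hbdef, div_mul_div_comm]
    exact div_le_div_of_nonneg_right hpsd (by positivity) |>.trans_eq rfl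
  obtain ⟨hge, hiff⟩ := key a b c ha0 ha1 hb0 hb1 hc2
  have hπ : 0 < π := pi_pos
  have hB : 0 ≤ arcsin a + arcsin b - 2 * arcsin c := by linarith
  have hegB : eg = (1 / π) * (arcsin a + arcsin b - 2 * arcsin c) := heg
  constructor
  · rw [hegB]; positivity
  · rw [hegB]
    constructor
    · intro h
      have hB0 : arcsin a + arcsin b - 2 * arcsin c = 0 := by
        rcases mul_eq_zero.1 h with h' | h'
        · exact absurd h' (by positivity)
        · exact h'
      obtain ⟨hab, hca⟩ := hiff.1 (by linarith)
      have hQT : Q = T := by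
        rw [hadef, hbdef] at hab
        field_simp at hab
        linarith
      have hTR : T = R := by
        have hss : Real.sqrt (1 + Q) * Real.sqrt (1 + T) = 1 + Q := by
          rw [← hQT, Real.mul_self_sqrt h1Q.le]
        rw [hcdef, hadef, hss] at hca
        rw [div_eq_div_iff (ne_of_gt h1Q) (ne_of_gt h1Q)] at hca
        have hRQ : R = Q := mul_right_cancel₀ (ne_of_gt h1Q) hca
        linarith
      exact ⟨hQT, hTR⟩
    · rintro ⟨hQT, hTR⟩
      have hab : a = b := by rw [hadef, hbdef, hQT]
      have hca : c = a := by
        rw [hcdef, hadef, ← hQT, ← hTR, Real.mul_self_sqrt h1Q.le, hQT, hTR]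
      rw [hiff.2 ⟨hab, hca⟩]; ring
end
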